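/- Fix a real s with s ≠ 0 and s ≠ 1 and fix Q ∈ Γ_n. Then the ratio ζ_s(P||Q)/χ²(P||Q) tends to 1/8 as P tends to Q within Γ_n with P ≠ Q. -/

import Mathlib

open scoped BigOperators
open Filter
open Topology

/-- Generalized arithmetic–geometric mean divergence of type `s`. -/
noncomputable def zetaS (s : ℝ) {n : ℕ} (P Q : Fin n → ℝ) : ℝ :=
  ∑ i, (s * (s - 1))⁻¹ *
    (((P i ^ s + Q i ^ s) / 2) * ((P i + Q i) / 2) ^ (1 - s) - (P i + Q i) / 2)

/-- Chi-square divergence. -/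
noncomputable def chiSq {n : ℕ} (P Q : Fin n → ℝ) : ℝ :=
  ∑ i, (P i - Q i) ^ 2 / Q i


lemma fq_zero (s q : ℝ) (hq : 0 < q) :
    ((q ^ s + q ^ s) / 2) * ((q + q) / 2) ^ (1 - s) - (q + q) / 2 = 0 := by
  have h2 : (q + q) / 2 = q := by ring
  rw [h2, show (q ^ s + q ^ s) / 2 = q ^ s by ring, ← Real.rpow_add hq]
  norm_num

lemma scalar_key (s : ℝ) (hs0 : s ≠ 0) (hs1 : s ≠ 1) (q : ℝ) (hq : 0 < q) :
    Tendsto (fun x : ℝ => ((s * (s - 1))⁻¹ *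
      (((x ^ s + q ^ s) / 2) * ((x + q) / 2) ^ (1 - s) - (x + q) / 2)) / ((x - q) ^ 2 / q))
      (𝓝[≠] q) (𝓝 (1 / 8)) := by
  have hss : s * (s - 1) ≠ 0 := mul_ne_zero hs0 (sub_ne_zero.mpr hs1)
  set f : ℝ → ℝ := fun x => ((x ^ s + q ^ s) / 2) * ((x + q) / 2) ^ (1 - s) - (x + q) / 2 with hf
  set F1 : ℝ → ℝ := fun x => (s * x ^ (s - 1) / 2) * ((x + q) / 2) ^ (1 - s)
      + ((x ^ s + q ^ s) / 2) * ((1 - s) * ((x + q) / 2) ^ (1 - s - 1) * (1 / 2)) - 1 / 2 with hF1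
  -- derivative of f for positive x
  have hderiv : ∀ x : ℝ, 0 < x → HasDerivAt f (F1 x) x := by
    intro x hx
    have hxq : (0:ℝ) < (x + q) / 2 := by positivity
    have h2 : HasDerivAt (fun y : ℝ => (y + q) / 2) (1 / 2) x := by
      simpa using ((hasDerivAt_id x).add_const q).div_const 2
    have h1 : HasDerivAt (fun y : ℝ => (y ^ s + q ^ s) / 2) (s * x ^ (s - 1) / 2) x :=
      ((Real.hasDerivAt_rpow_const (Or.inl hx.ne')).add_const _).div_const 2
    have h3 : HasDerivAt (fun y : ℝ => ((y + q) / 2) ^ (1 - s))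
        ((1 - s) * ((x + q) / 2) ^ (1 - s - 1) * (1 / 2)) x := by
      have := (Real.hasDerivAt_rpow_const (p := 1 - s) (Or.inl hxq.ne')).comp x h2
      exact this
    exact (h1.mul h3).sub h2
  have hF1q : F1 q = 0 := by
    have h2 : (q + q) / 2 = q := by ring
    rw [hF1]
    simp only [h2]
    rw [show (q ^ s + q ^ s) / 2 = q ^ s by ring]
    rw [show s * q ^ (s-1) / 2 * q ^ (1-s) = s * (q ^ (s-1) * q ^ (1-s)) / 2 by ring,
      ← Real.rpow_add hq, show q ^ s * ((1-s) * q ^ (1-s-1) * (1/2)) = (1-s) * (q ^ s * q ^ (1-s-1)) / 2 by ring,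
      ← Real.rpow_add hq]
    norm_num
    ring
  have hfq : f q = 0 := fq_zero s q hq
  -- F1 has derivative s(s-1)/(4q) at q
  have hF1deriv : HasDerivAt F1 (s * (s - 1) / (4 * q)) q := by
    have hxq : (0:ℝ) < (q + q) / 2 := by positivity
    have h2 : HasDerivAt (fun y : ℝ => (y + q) / 2) (1 / 2) q := by
      simpa using ((hasDerivAt_id q).add_const q).div_const 2
    have hA : HasDerivAt (fun y : ℝ => s * y ^ (s - 1) / 2)
        (s * ((s - 1) * q ^ (s - 1 - 1)) / 2) q :=
      ((Real.hasDerivAt_rpow_const (p := s - 1) (Or.inl hq.ne')).const_mul s).div_const 2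
    have hB : HasDerivAt (fun y : ℝ => ((y + q) / 2) ^ (1 - s))
        ((1 - s) * ((q + q) / 2) ^ (1 - s - 1) * (1 / 2)) q := by
      have := (Real.hasDerivAt_rpow_const (p := 1 - s) (Or.inl hxq.ne')).comp q h2
      exact this
    have hC : HasDerivAt (fun y : ℝ => (y ^ s + q ^ s) / 2) (s * q ^ (s - 1) / 2) q :=
      ((Real.hasDerivAt_rpow_const (Or.inl hq.ne')).add_const _).div_const 2
    have hB2 : HasDerivAt (fun y : ℝ => ((y + q) / 2) ^ (1 - s - 1))
        ((1 - s - 1) * ((q + q) / 2) ^ (1 - s - 1 - 1) * (1 / 2)) q := by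
      have := (Real.hasDerivAt_rpow_const (p := 1 - s - 1) (Or.inl hxq.ne')).comp q h2
      exact this
    have hE : HasDerivAt (fun y : ℝ => (1 - s) * ((y + q) / 2) ^ (1 - s - 1) * (1 / 2))
        ((1 - s) * ((1 - s - 1) * ((q + q) / 2) ^ (1 - s - 1 - 1) * (1 / 2)) * (1 / 2)) q :=
      (hB2.const_mul (1 - s)).mul_const (1 / 2)
    have total := ((hA.mul hB).add (hC.mul hE)).sub_const (1 / 2)
    refine total.congr_deriv ?_
    have h2q : (q + q) / 2 = q := by ring
    have ha : q ^ s ≠ 0 := (Real.rpow_pos_of_pos hq s).ne'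
    have e2 : q ^ (1 - s) = q / q ^ s := by rw [Real.rpow_sub hq, Real.rpow_one]
    have e3 : q ^ (s - 1) = q ^ s / q := by rw [Real.rpow_sub hq, Real.rpow_one]
    have e1 : q ^ (s - 1 - 1) = q ^ s / q / q := by
      rw [Real.rpow_sub hq, Real.rpow_sub hq, Real.rpow_one]
    have e4 : q ^ (1 - s - 1) = q / q ^ s / q := by
      rw [Real.rpow_sub hq, Real.rpow_sub hq, Real.rpow_one]
    have e5 : q ^ (1 - s - 1 - 1) = q / q ^ s / q / q := by
      rw [Real.rpow_sub hq, Real.rpow_sub hq, Real.rpow_sub hq, Real.rpow_one]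
    rw [h2q, e1, e2, e3, e4, e5]
    field_simp
    ring
  have hslope : Tendsto (fun x => F1 x / (2 * (x - q))) (𝓝[≠] q) (𝓝 (s * (s - 1) / (8 * q))) := by
    have h := hasDerivAt_iff_tendsto_slope.mp hF1deriv
    have h2 := h.div_const 2
    refine Tendsto.congr' ?_ (by convert h2 using 2; ring)
    filter_upwards [self_mem_nhdsWithin] with x hx
    have hxq : x - q ≠ 0 := sub_ne_zero.mpr hx
    rw [slope_def_field, hF1q, sub_zero, div_div, mul_comm (x - q) 2]
  have hmain : Tendsto (fun x => f x / (x - q) ^ 2) (𝓝[≠] q) (𝓝 (s * (s - 1) / (8 * q))) := by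
    apply HasDerivAt.lhopital_zero_nhdsNE (f' := F1) (g' := fun x => (2:ℕ) * (x - q) ^ (2-1) * 1)
    · filter_upwards [nhdsWithin_le_nhds (eventually_gt_nhds hq)] with x hx
      exact hderiv x hx
    · filter_upwards [self_mem_nhdsWithin] with x hx
      exact ((hasDerivAt_id x).sub_const q).pow 2
    · filter_upwards [self_mem_nhdsWithin] with x hx
      have : x - q ≠ 0 := sub_ne_zero.mpr hx
      simp [this]
    · have hc : ContinuousAt f q := by
        have h1 : ContinuousAt (fun y : ℝ => (y ^ s + q ^ s) / 2) q :=
          (((Real.continuousAt_rpow_const q s (Or.inl hq.ne')).add continuousAt_const).div_const 2)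
        have h2 : ContinuousAt (fun y : ℝ => (y + q) / 2) q :=
          ((continuousAt_id.add continuousAt_const).div_const 2)
        have h3 : ContinuousAt (fun y : ℝ => ((y + q) / 2) ^ (1 - s)) q := by
          apply ContinuousAt.rpow_const h2
          left
          show (q + q) / 2 ≠ 0
          positivity
        exact (h1.mul h3).sub h2
      have := hc.tendsto
      rw [hfq] at this
      exact this.mono_left nhdsWithin_le_nhds
    · have : Tendsto (fun x : ℝ => (x - q) ^ 2) (𝓝 q) (𝓝 ((q - q) ^ 2)) := by
        exact ((continuous_id.sub continuous_const).pow 2).tendsto q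
      simpa using this.mono_left nhdsWithin_le_nhds
    · refine Tendsto.congr' ?_ hslope
      filter_upwards [self_mem_nhdsWithin] with x hx
      norm_num
  -- final manipulation
  have heq : ∀ᶠ x in 𝓝[≠] q, (f x / (x - q) ^ 2) * (q * (s * (s - 1))⁻¹)
      = ((s * (s - 1))⁻¹ * f x) / ((x - q) ^ 2 / q) := by
    filter_upwards [self_mem_nhdsWithin] with x hx
    rw [div_div_eq_mul_div]
    ring
  have := (hmain.mul_const (q * (s * (s - 1))⁻¹)).congr' heq
  convert this using 2
  field_simp [hq.ne', hss]

/-- For `s ≠ 0,1` and fixed `Q ∈ Γ_n`, `ζ_s(P‖Q)/χ²(P‖Q) → 1/8` as `P → Q` within `Γ_n`, `P ≠ Q`. -/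
theorem zetaS_div_chiSq_tendsto (s : ℝ) (hs0 : s ≠ 0) (hs1 : s ≠ 1)
    (n : ℕ) (hn : 2 ≤ n) (Q : Fin n → ℝ) (hQ : ∀ i, 0 < Q i) (hQ1 : ∑ i, Q i = 1) :
    Tendsto (fun P : Fin n → ℝ => zetaS s P Q / chiSq P Q)
      (nhdsWithin Q {P : Fin n → ℝ | (∀ i, 0 < P i) ∧ (∑ i, P i = 1) ∧ P ≠ Q})
      (nhds (1 / 8)) := by
  set g : Fin n → ℝ → ℝ := fun i x => (s * (s - 1))⁻¹ *
    (((x ^ s + Q i ^ s) / 2) * ((x + Q i) / 2) ^ (1 - s) - (x + Q i) / 2) with hgdef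
  set c : Fin n → ℝ → ℝ := fun i x => (x - Q i) ^ 2 / Q i with hcdef
  rw [Metric.tendsto_nhds]
  intro ε hε
  have hA : ∀ i, ∀ᶠ x in 𝓝 (Q i), |g i x - c i x / 8| ≤ ε / 2 * c i x := by
    intro i
    have hk := scalar_key s hs0 hs1 (Q i) (hQ i)
    have h2 := Metric.tendsto_nhds.mp hk (ε / 2) (by positivity)
    rw [eventually_nhdsWithin_iff] at h2
    filter_upwards [h2] with x hx
    by_cases hxq : x = Q i
    · have hg0 : g i x = 0 := by
        rw [hgdef]
        simp only [hxq]
        rw [fq_zero s (Q i) (hQ i), mul_zero]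
      have hc0 : c i x = 0 := by simp [hcdef, hxq]
      simp [hg0, hc0]
    · have hx' := hx hxq
      have h0 : x - Q i ≠ 0 := sub_ne_zero.mpr hxq
      have hcpos : 0 < c i x := div_pos (sq_pos_of_ne_zero h0) (hQ i)
      rw [Real.dist_eq] at hx'
      have key : g i x - c i x / 8 = (g i x / c i x - 1 / 8) * c i x := by
        field_simp
      rw [key, abs_mul, abs_of_pos hcpos]
      exact mul_le_mul_of_nonneg_right hx'.le hcpos.le
  have hB : ∀ᶠ P in 𝓝 Q, ∀ i, |g i (P i) - c i (P i) / 8| ≤ ε / 2 * c i (P i) :=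
    eventually_all.mpr fun i => ((continuous_apply i).tendsto Q).eventually (hA i)
  filter_upwards [nhdsWithin_le_nhds hB, self_mem_nhdsWithin] with P hP hPS
  obtain ⟨hPpos, hPsum, hPne⟩ := hPS
  obtain ⟨i₀, hi₀⟩ := Function.ne_iff.mp hPne
  have hCpos : 0 < chiSq P Q := by
    rw [chiSq]
    refine Finset.sum_pos' (fun i _ => div_nonneg (sq_nonneg _) (hQ i).le)
      ⟨i₀, Finset.mem_univ _, div_pos (sq_pos_of_ne_zero (sub_ne_zero.mpr hi₀)) (hQ i₀)⟩
  have hZ : |zetaS s P Q - chiSq P Q / 8| ≤ ε / 2 * chiSq P Q := by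
    have h1 : zetaS s P Q - chiSq P Q / 8 = ∑ i, (g i (P i) - c i (P i) / 8) := by
      rw [zetaS, chiSq, Finset.sum_div, ← Finset.sum_sub_distrib]
    rw [h1]
    calc |∑ i, (g i (P i) - c i (P i) / 8)| ≤ ∑ i, |g i (P i) - c i (P i) / 8| :=
          Finset.abs_sum_le_sum_abs _ _
      _ ≤ ∑ i, ε / 2 * c i (P i) := Finset.sum_le_sum fun i _ => hP i
      _ = ε / 2 * chiSq P Q := by rw [chiSq, Finset.mul_sum]
  rw [Real.dist_eq]
  have h2 : zetaS s P Q / chiSq P Q - 1 / 8 = (zetaS s P Q - chiSq P Q / 8) / chiSq P Q := by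
    field_simp [hCpos.ne']
  rw [h2, abs_div, abs_of_pos hCpos]
  have h3 : |zetaS s P Q - chiSq P Q / 8| / chiSq P Q ≤ ε / 2 := by
    rw [div_le_iff₀ hCpos]
    linarith
  linarith
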